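/- arXiv:2409.17594 — 4 statements merged into one kernel-verified Lean document; each statement's English description precedes it below -/
import Mathlib

section
/- For n ≥ 2, α ∈ [0,1], and x ∈ [0,1], the α-Bernstein basis functions satisfy ∑_{k=0}^{n} b_{n,k}^{α}(x) = 1. -/
/-! Write `b_{n,k}^α(x) = (1 - α) (A_k + B_k) + α C_k`. The `C_k` form the degree-`n` Bernstein
basis, which sums to `(x + (1 - x))^n = 1`; the `A_k` and `B_k` are the degree-`(n-2)` Bernstein
basis multiplied by `1 - x` and by `x` (and shifted by two indices), so they sum to `1 - x` and `x`. -/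

open scoped BigOperators
open intervalIntegral Real

/-- The α-Bernstein basis function `b_{n,k}^α(x)` (for `n ≥ 2`), written with the
convention that binomial coefficients with out-of-range indices vanish. -/
noncomputable def alphaBernstein (n k : ℕ) (α x : ℝ) : ℝ :=
  (1 - α) * ((n - 2).choose k) * x ^ k * (1 - x) ^ (n - k - 1)
  + (if 2 ≤ k then (1 - α) * ((n - 2).choose (k - 2)) * x ^ (k - 1) * (1 - x) ^ (n - k) else 0)
  + α * (n.choose k) * x ^ k * (1 - x) ^ (n - k)

/-- The normalized Riemann–Liouville fractional weight functional of order `β` on `[0,1]`: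
`g ↦ Γ(β+1) ∫₀¹ (1-t)^(β-1)/Γ(β) · g t dt`. -/
noncomputable def fracWeight (β : ℝ) (g : ℝ → ℝ) : ℝ :=
  Real.Gamma (β + 1) * ∫ t in (0:ℝ)..1, (1 - t) ^ (β - 1) / Real.Gamma β * g t

/-- The fractional α-Bernstein–Kantorovich operator `K_{n,α}^β`. -/
noncomputable def fracKantorovich (n : ℕ) (α β : ℝ) (f : ℝ → ℝ) (x : ℝ) : ℝ :=
  ∑ k ∈ Finset.range (n + 1),
    alphaBernstein n k α x * fracWeight β (fun t => f ((k + t) / (n + 1)))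

/-- The correction factor `a_{n,k} = k(n+1)(β+1)/(n(kβ+1))`. -/
noncomputable def corrFactor (n k : ℕ) (β : ℝ) : ℝ :=
  (k : ℝ) * (n + 1) * (β + 1) / (n * (k * β + 1))

/-- The modified fractional α-Bernstein–Kantorovich operator `A_{n,α}^β`. -/
noncomputable def modFracKantorovich (n : ℕ) (α β : ℝ) (f : ℝ → ℝ) (x : ℝ) : ℝ :=
  ∑ k ∈ Finset.range (n + 1),
    alphaBernstein n k α x *
      fracWeight β (fun t => f (corrFactor n k β * ((k + t) / (n + 1))))

/-- The bivariate fractional α-Bernstein–Kantorovich operator `K_{n,m,α₁,α₂}^{β₁,β₂}`. -/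
noncomputable def bivFracKantorovich (n m : ℕ) (α₁ α₂ β₁ β₂ : ℝ) (f : ℝ → ℝ → ℝ)
    (x y : ℝ) : ℝ :=
  ∑ k ∈ Finset.range (n + 1), ∑ j ∈ Finset.range (m + 1),
    alphaBernstein n k α₁ x * alphaBernstein m j α₂ y *
      (Real.Gamma (β₁ + 1) * Real.Gamma (β₂ + 1) *
        ∫ t in (0:ℝ)..1, ∫ s in (0:ℝ)..1,
          (1 - t) ^ (β₁ - 1) * (1 - s) ^ (β₂ - 1) / (Real.Gamma β₁ * Real.Gamma β₂) *
            f ((k + t) / (n + 1)) ((j + s) / (m + 1)))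

namespace AlphaBernstein

open Finset

variable {R : Type*} [CommRing R]

theorem sum_choose_mul_pow_mul_one_sub_pow (m : ℕ) (x : R) :
    ∑ k ∈ range (m + 1), (m.choose k : R) * x ^ k * (1 - x) ^ (m - k) = 1 := by
  simpa [bernsteinPolynomial, Polynomial.eval_finsetSum] using
    congrArg (Polynomial.eval x) (bernsteinPolynomial.sum R m)

theorem sum_choose_sub_two_mul_pow {n : ℕ} (hn : 2 ≤ n) (x : R) :
    ∑ k ∈ range (n + 1), ((n - 2).choose k : R) * x ^ k * (1 - x) ^ (n - k - 1) = 1 - x := by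
  obtain ⟨m, rfl⟩ : ∃ m, n = m + 2 := ⟨n - 2, by omega⟩
  have hterm : ∀ k ∈ range (m + 1), (m.choose k : R) * x ^ k * (1 - x) ^ (m + 2 - k - 1) =
      (1 - x) * ((m.choose k : R) * x ^ k * (1 - x) ^ (m - k)) := by
    intro k hk
    rw [show m + 2 - k - 1 = m - k + 1 by grind]
    ring
  rw [Nat.add_sub_cancel, sum_range_succ, sum_range_succ, Nat.choose_succ_self,
    Nat.choose_eq_zero_of_lt (by omega : m < m + 2), sum_congr rfl hterm, ← mul_sum,
    sum_choose_mul_pow_mul_one_sub_pow]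
  simp

theorem sum_ite_choose_sub_two_mul_pow {n : ℕ} (hn : 2 ≤ n) (x : R) :
    ∑ k ∈ range (n + 1),
      (if 2 ≤ k then ((n - 2).choose (k - 2) : R) * x ^ (k - 1) * (1 - x) ^ (n - k) else 0) =
      x := by
  obtain ⟨m, rfl⟩ : ∃ m, n = m + 2 := ⟨n - 2, by omega⟩
  have hterm : ∀ k ∈ range (m + 1),
      (if 2 ≤ k + 2 then (m.choose (k + 2 - 2) : R) * x ^ (k + 2 - 1) * (1 - x) ^ (m + 2 - (k + 2))
        else 0) = x * ((m.choose k : R) * x ^ k * (1 - x) ^ (m - k)) := by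
    intro k _
    rw [if_pos (by omega), Nat.add_sub_cancel, Nat.add_sub_add_right,
      show k + 2 - 1 = k + 1 by omega]
    ring
  rw [Nat.add_sub_cancel, sum_range_succ', sum_range_succ', sum_congr rfl hterm, ← mul_sum,
    sum_choose_mul_pow_mul_one_sub_pow]
  simp

end AlphaBernstein

theorem alphaBernstein_sum_eq_one_general (n : ℕ) (hn : 2 ≤ n) (α x : ℝ) :
    ∑ k ∈ Finset.range (n + 1), alphaBernstein n k α x = 1 := by
  have hsplit : ∀ k, alphaBernstein n k α x =
      (1 - α) * (((n - 2).choose k : ℝ) * x ^ k * (1 - x) ^ (n - k - 1))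
      + (1 - α) * (if 2 ≤ k then ((n - 2).choose (k - 2) : ℝ) * x ^ (k - 1) * (1 - x) ^ (n - k)
          else 0)
      + α * ((n.choose k : ℝ) * x ^ k * (1 - x) ^ (n - k)) := by
    intro k
    unfold alphaBernstein
    split_ifs <;> ring
  simp only [hsplit, Finset.sum_add_distrib, ← Finset.mul_sum,
    AlphaBernstein.sum_choose_sub_two_mul_pow hn, AlphaBernstein.sum_ite_choose_sub_two_mul_pow hn,
    AlphaBernstein.sum_choose_mul_pow_mul_one_sub_pow]
  ring

theorem alphaBernstein_sum_eq_one (n : ℕ) (hn : 2 ≤ n) (α x : ℝ)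
    (hα : α ∈ Set.Icc (0:ℝ) 1) (hx : x ∈ Set.Icc (0:ℝ) 1) :
    ∑ k ∈ Finset.range (n + 1), alphaBernstein n k α x = 1 :=
  alphaBernstein_sum_eq_one_general n hn α x
end

section
/- For n ≥ 2, α ∈ [0,1], and x ∈ [0,1], the α-Bernstein operator reproduces linear functions: ∑_{k=0}^{n} b_{n,k}^{α}(x) · (k/n) = x. -/
open scoped BigOperators
open intervalIntegral Real

/-!
Write `n = m + 2` and `B_{m,k}` for the classical Bernstein basis. Then
`b_{n,k}^α = (1 - α) ((1 - x) B_{m,k} + x B_{m,k-2}) + α B_{n,k}`, so the first moment reduces to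
the classical `∑ k B_{m,k} = m x` and `∑ B_{m,k} = 1`:
`((1 - α) ((1 - x) m x + x (m x + 2)) + α n x) / n = x`.
-/

open Finset Polynomial

noncomputable def bernsteinBasis (n k : ℕ) (x : ℝ) : ℝ :=
  (bernsteinPolynomial ℝ n k).eval x

namespace bernsteinBasis

lemma eq_choose_mul (n k : ℕ) (x : ℝ) :
    bernsteinBasis n k x = n.choose k * x ^ k * (1 - x) ^ (n - k) := by
  simp [bernsteinBasis, bernsteinPolynomial]

lemma eq_zero_of_lt {n k : ℕ} (h : n < k) (x : ℝ) : bernsteinBasis n k x = 0 := by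
  simp [bernsteinBasis, bernsteinPolynomial.eq_zero_of_lt ℝ h]

lemma sum (n : ℕ) (x : ℝ) : ∑ k ∈ range (n + 1), bernsteinBasis n k x = 1 := by
  simpa [bernsteinBasis, eval_finsetSum] using congrArg (eval x) (bernsteinPolynomial.sum ℝ n)

lemma sum_mul_of_lt {n N : ℕ} (h : n < N) (x : ℝ) :
    ∑ k ∈ range N, (k : ℝ) * bernsteinBasis n k x = n * x := by
  have hsub : range (n + 1) ⊆ range N := range_subset_range.mpr h
  rw [← sum_subset hsub fun k _ hk => by
    rw [eq_zero_of_lt (by simpa using hk), mul_zero]]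
  simpa [bernsteinBasis, eval_finsetSum, nsmul_eq_mul] using
    congrArg (eval x) (bernsteinPolynomial.sum_smul ℝ n)

end bernsteinBasis

open bernsteinBasis

lemma alphaBernstein_eq (m k : ℕ) (α x : ℝ) :
    alphaBernstein (m + 2) k α x =
      (1 - α) * ((1 - x) * bernsteinBasis m k x
        + if 2 ≤ k then x * bernsteinBasis m (k - 2) x else 0)
      + α * bernsteinBasis (m + 2) k x := by
  have hfirst : (m.choose k : ℝ) * x ^ k * (1 - x) ^ (m + 2 - k - 1) =
      (1 - x) * bernsteinBasis m k x := by
    rw [eq_choose_mul]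
    rcases le_or_gt k m with hk | hk
    · rw [show m + 2 - k - 1 = m - k + 1 by omega, pow_succ]
      ring
    · simp [Nat.choose_eq_zero_of_lt hk]
  have hsecond : 2 ≤ k → (m.choose (k - 2) : ℝ) * x ^ (k - 1) * (1 - x) ^ (m + 2 - k) =
      x * bernsteinBasis m (k - 2) x := by
    intro hk
    obtain ⟨i, rfl⟩ := Nat.exists_eq_add_of_le' hk
    rw [eq_choose_mul, show i + 2 - 1 = i + 1 by omega, show m + 2 - (i + 2) = m - i by omega,
      Nat.add_sub_cancel, pow_succ]
    ring
  rw [alphaBernstein, Nat.add_sub_cancel, eq_choose_mul (m + 2)]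
  split_ifs with hk
  · linear_combination (1 - α) * (hfirst + hsecond hk)
  · linear_combination (1 - α) * hfirst

lemma sum_mul_bernsteinBasis_shift_two (m : ℕ) (x : ℝ) :
    ∑ k ∈ range (m + 3), (k : ℝ) * (if 2 ≤ k then bernsteinBasis m (k - 2) x else 0) =
      m * x + 2 := by
  have hterm : ∀ i : ℕ, ((i + 1 + 1 : ℕ) : ℝ) *
      (if 2 ≤ i + 1 + 1 then bernsteinBasis m (i + 1 + 1 - 2) x else 0) =
        i * bernsteinBasis m i x + 2 * bernsteinBasis m i x := by
    intro i
    rw [if_pos (by omega), show i + 1 + 1 - 2 = i by omega]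
    push_cast
    ring
  rw [sum_range_succ', sum_range_succ']
  simp only [hterm, sum_add_distrib, ← mul_sum, sum_mul_of_lt (Nat.lt_succ_self m),
    bernsteinBasis.sum]
  norm_num

theorem alphaBernstein_first_moment_general (n : ℕ) (hn : 2 ≤ n) (α x : ℝ) :
    ∑ k ∈ Finset.range (n + 1), alphaBernstein n k α x * ((k : ℝ) / n) = x := by
  obtain ⟨m, rfl⟩ : ∃ m, n = m + 2 := ⟨n - 2, by omega⟩
  have hn' : ((m + 2 : ℕ) : ℝ) ≠ 0 := by positivity
  calc ∑ k ∈ range (m + 3), alphaBernstein (m + 2) k α x * ((k : ℝ) / (m + 2 : ℕ))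
      = ((1 - α) * ((1 - x) * ∑ k ∈ range (m + 3), (k : ℝ) * bernsteinBasis m k x
          + x * ∑ k ∈ range (m + 3), (k : ℝ) * (if 2 ≤ k then bernsteinBasis m (k - 2) x else 0))
          + α * ∑ k ∈ range (m + 3), (k : ℝ) * bernsteinBasis (m + 2) k x) / (m + 2 : ℕ) := by
        simp only [mul_sum, ← sum_add_distrib, sum_div]
        refine sum_congr rfl fun k _ => ?_
        rw [alphaBernstein_eq]
        split_ifs <;> ring
    _ = ((1 - α) * ((1 - x) * (m * x) + x * (m * x + 2)) + α * ((m + 2 : ℕ) * x)) / (m + 2 : ℕ) := by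
        rw [sum_mul_of_lt (by omega), sum_mul_of_lt (by omega), sum_mul_bernsteinBasis_shift_two]
    _ = x := by
        field_simp
        push_cast
        ring

theorem alphaBernstein_first_moment (n : ℕ) (hn : 2 ≤ n) (α x : ℝ)
    (hα : α ∈ Set.Icc (0:ℝ) 1) (hx : x ∈ Set.Icc (0:ℝ) 1) :
    ∑ k ∈ Finset.range (n + 1), alphaBernstein n k α x * ((k : ℝ) / n) = x :=
  alphaBernstein_first_moment_general n hn α x
end

section
/- For n ≥ 2, α ∈ [0,1], and x ∈ [0,1], the second moment of the α-Bernstein operator is ∑_{k=0}^{n} b_{n,k}^{α}(x) · (k/n)² = x² + ((n + 2(1-α))/n²) x(1-x). -/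
open scoped BigOperators
open intervalIntegral Real

lemma aux_bern0 (m : ℕ) (x : ℝ) :
    ∑ k ∈ Finset.range (m+1), (m.choose k : ℝ) * x ^ k * (1-x) ^ (m-k) = 1 := by
  have h := congrArg (Polynomial.eval x) (bernsteinPolynomial.sum ℝ m)
  simpa [bernsteinPolynomial, Polynomial.eval_finset_sum] using h

lemma aux_bern1 (m : ℕ) (x : ℝ) :
    ∑ k ∈ Finset.range (m+1), (k:ℝ) * ((m.choose k : ℝ) * x ^ k * (1-x) ^ (m-k))
      = m * x := by
  have h := congrArg (Polynomial.eval x) (bernsteinPolynomial.sum_smul ℝ m)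
  simpa [bernsteinPolynomial, Polynomial.eval_finset_sum, mul_assoc] using h

lemma aux_bern2 (m : ℕ) (x : ℝ) :
    ∑ k ∈ Finset.range (m+1), (k:ℝ) * ((k:ℝ) - 1) * ((m.choose k : ℝ) * x ^ k * (1-x) ^ (m-k))
      = (m:ℝ) * ((m:ℝ) - 1) * x ^ 2 := by
  have h := congrArg (Polynomial.eval x) (bernsteinPolynomial.sum_mul_smul ℝ m)
  simp [bernsteinPolynomial, Polynomial.eval_finset_sum, mul_assoc] at h
  rw [Finset.sum_congr rfl (fun k _ => ?_)]
  · rw [h]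
    rcases m with _ | m
    · simp
    · push_cast [Nat.succ_sub_one]
      ring
  · rcases k with _ | k
    · simp
    · push_cast [Nat.succ_sub_one]
      ring

lemma aux_bernsq (m : ℕ) (x : ℝ) :
    ∑ k ∈ Finset.range (m+1), (k:ℝ)^2 * ((m.choose k : ℝ) * x ^ k * (1-x) ^ (m-k))
      = (m:ℝ) * x + (m:ℝ) * ((m:ℝ) - 1) * x ^ 2 := by
  have h : ∀ k ∈ Finset.range (m+1), (k:ℝ)^2 * ((m.choose k : ℝ) * x ^ k * (1-x) ^ (m-k))
      = (k:ℝ) * ((k:ℝ) - 1) * ((m.choose k : ℝ) * x ^ k * (1-x) ^ (m-k))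
        + (k:ℝ) * ((m.choose k : ℝ) * x ^ k * (1-x) ^ (m-k)) := fun k _ => by ring
  rw [Finset.sum_congr rfl h, Finset.sum_add_distrib, aux_bern1, aux_bern2]; ring

theorem aux_alphaBernstein_second_moment_aux (n : ℕ) (hn : 2 ≤ n) (α x : ℝ) :
    ∑ k ∈ Finset.range (n + 1),
      ((1 - α) * ((n - 2).choose k) * x ^ k * (1 - x) ^ (n - k - 1)
      + (if 2 ≤ k then (1 - α) * ((n - 2).choose (k - 2)) * x ^ (k - 1) * (1 - x) ^ (n - k) else 0)
      + α * (n.choose k) * x ^ k * (1 - x) ^ (n - k)) * ((k : ℝ) / n) ^ 2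
      = x ^ 2 + ((n + 2 * (1 - α)) / (n : ℝ) ^ 2) * x * (1 - x) := by
  obtain ⟨m, rfl⟩ : ∃ m, n = m + 2 := ⟨n - 2, by omega⟩
  clear hn
  have hN : ((m:ℝ) + 2) ≠ 0 := by positivity
  set N : ℝ := (m:ℝ) + 2 with hNdef
  have key : ∀ k ∈ Finset.range (m + 2 + 1),
      ((1 - α) * (((m+2) - 2).choose k) * x ^ k * (1 - x) ^ ((m+2) - k - 1)
      + (if 2 ≤ k then (1 - α) * (((m+2) - 2).choose (k - 2)) * x ^ (k - 1) * (1 - x) ^ ((m+2) - k) else 0)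
      + α * ((m+2).choose k) * x ^ k * (1 - x) ^ ((m+2) - k)) * ((k : ℝ) / ((m+2:ℕ):ℝ)) ^ 2
      = (1-α) * (m.choose k : ℝ) * x ^ k * (1-x) ^ (m+2-k-1) * ((k:ℝ)/N)^2
        + (if 2 ≤ k then (1-α) * (m.choose (k-2) : ℝ) * x ^ (k-1) * (1-x) ^ (m+2-k) * ((k:ℝ)/N)^2 else 0)
        + α * ((m+2).choose k : ℝ) * x ^ k * (1-x) ^ (m+2-k) * ((k:ℝ)/N)^2 := by
    intro k _
    have hc : ((m+2:ℕ):ℝ) = N := by push_cast [hNdef]; ring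
    simp only [Nat.add_sub_cancel, add_mul, ite_mul, zero_mul, hc]
  rw [Finset.sum_congr rfl key, Finset.sum_add_distrib, Finset.sum_add_distrib]
  -- Part A
  have hA : ∑ k ∈ Finset.range (m + 2 + 1),
      (1-α) * (m.choose k : ℝ) * x ^ k * (1-x) ^ (m+2-k-1) * ((k:ℝ)/N)^2
      = (1-α)*(1-x)/N^2 * ((m:ℝ)*x + (m:ℝ)*((m:ℝ)-1)*x^2) := by
    rw [← Finset.sum_subset (Finset.range_subset_range.2 (by omega : m + 1 ≤ m + 2 + 1))
      (fun k _ hk => by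
        have : m < k := by simp only [Finset.mem_range] at hk; omega
        simp [Nat.choose_eq_zero_of_lt this])]
    have e1 : ∀ k ∈ Finset.range (m+1),
        (1-α) * (m.choose k : ℝ) * x ^ k * (1-x) ^ (m+2-k-1) * ((k:ℝ)/N)^2
        = (1-α)*(1-x)/N^2 * ((k:ℝ)^2 * ((m.choose k:ℝ) * x^k * (1-x)^(m-k))) := by
      intro k hk
      have hk' : k ≤ m := by simpa using Nat.lt_succ_iff.mp (Finset.mem_range.mp hk)
      have h2 : m + 2 - k - 1 = (m - k) + 1 := by omega
      rw [h2, pow_succ]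
      field_simp
    rw [Finset.sum_congr rfl e1, ← Finset.mul_sum, aux_bernsq]
  -- Part B
  have hB : ∑ k ∈ Finset.range (m + 2 + 1),
      (if 2 ≤ k then (1-α) * (m.choose (k-2) : ℝ) * x ^ (k-1) * (1-x) ^ (m+2-k) * ((k:ℝ)/N)^2 else 0)
      = (1-α)*x/N^2 * (((m:ℝ)*x + (m:ℝ)*((m:ℝ)-1)*x^2) + 4*((m:ℝ)*x) + 4*1) := by
    rw [Finset.sum_range_succ', Finset.sum_range_succ']
    norm_num
    have e2 : ∀ j ∈ Finset.range (m+1),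
        (1-α) * (m.choose (j+1+1-2) : ℝ) * x ^ (j+1) * (1-x) ^ (m+2-(j+1+1)) * (((j:ℝ)+1+1)/N)^2
        = (1-α)*x/N^2 * ((j:ℝ)^2 * ((m.choose j:ℝ) * x^j * (1-x)^(m-j)))
          + (4*((1-α)*x/N^2)) * ((j:ℝ) * ((m.choose j:ℝ) * x^j * (1-x)^(m-j)))
          + (4*((1-α)*x/N^2)) * ((m.choose j:ℝ) * x^j * (1-x)^(m-j)) := by
      intro j _
      have h1 : j+1+1-2 = j := by omega
      have h3 : m+2-(j+1+1) = m-j := by omega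
      rw [h1, h3, pow_succ]
      field_simp
      ring
    rw [Finset.sum_congr rfl e2, Finset.sum_add_distrib, Finset.sum_add_distrib,
      ← Finset.mul_sum, ← Finset.mul_sum, ← Finset.mul_sum, aux_bernsq, aux_bern1, aux_bern0]
    ring
  -- Part C
  have hC : ∑ k ∈ Finset.range (m + 2 + 1),
      α * ((m+2).choose k : ℝ) * x ^ k * (1-x) ^ (m+2-k) * ((k:ℝ)/N)^2
      = α/N^2 * (((m:ℝ)+2)*x + ((m:ℝ)+2)*((m:ℝ)+1)*x^2) := by
    have e3 : ∀ k ∈ Finset.range ((m+2)+1),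
        α * ((m+2).choose k : ℝ) * x ^ k * (1-x) ^ (m+2-k) * ((k:ℝ)/N)^2
        = α/N^2 * ((k:ℝ)^2 * (((m+2).choose k:ℝ) * x^k * (1-x)^(m+2-k))) := by
      intro k _
      field_simp
    rw [Finset.sum_congr rfl e3, ← Finset.mul_sum, aux_bernsq (m+2)]
    push_cast
    ring
  rw [hA, hB, hC]
  push_cast
  field_simp
  ring

theorem alphaBernstein_second_moment (n : ℕ) (hn : 2 ≤ n) (α x : ℝ)
    (hα : α ∈ Set.Icc (0:ℝ) 1) (hx : x ∈ Set.Icc (0:ℝ) 1) :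
    ∑ k ∈ Finset.range (n + 1), alphaBernstein n k α x * ((k : ℝ) / n) ^ 2
      = x ^ 2 + ((n + 2 * (1 - α)) / (n : ℝ) ^ 2) * x * (1 - x) := by
  simpa only [alphaBernstein] using aux_alphaBernstein_second_moment_aux n hn α x
end

section
/- Second moment of the bivariate fractional operator: for n, m ≥ 2, α₁, α₂ ∈ [0,1], β₁, β₂ ∈ (0,1], and (x,y) ∈ [0,1]², K_{n,m,α₁,α₂}^{β₁,β₂}(e₂₀; x, y) = (n²/(n+1)²)[x² + ((n+2(1-α₁))/n²)x(1-x)] + 2nx/((β₁+1)(n+1)²) + 2/((n+1)²(2+β₁)(1+β₁)), where e₂₀(t,s)=t². -/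
open scoped BigOperators
open intervalIntegral Real

noncomputable def bp (n k : ℕ) (x : ℝ) : ℝ := (n.choose k : ℝ) * x ^ k * (1 - x) ^ (n - k)

lemma bp_eval (n k : ℕ) (x : ℝ) : (bernsteinPolynomial ℝ n k).eval x = bp n k x := by
  simp [bernsteinPolynomial, bp]

lemma B0 (n : ℕ) (x : ℝ) : ∑ k ∈ Finset.range (n+1), bp n k x = 1 := by
  have := congrArg (Polynomial.eval x) (bernsteinPolynomial.sum ℝ n)
  simpa [Polynomial.eval_finset_sum, bp_eval] using this

lemma B1 (n : ℕ) (x : ℝ) : ∑ k ∈ Finset.range (n+1), (k:ℝ) * bp n k x = n * x := by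
  have := congrArg (Polynomial.eval x) (bernsteinPolynomial.sum_smul ℝ n)
  simpa [Polynomial.eval_finset_sum, bp_eval, mul_comm] using this

lemma B2 (n : ℕ) (x : ℝ) : ∑ k ∈ Finset.range (n+1), (k:ℝ)^2 * bp n k x
    = (n:ℝ)*((n:ℝ)-1) * x^2 + n * x := by
  have h := congrArg (Polynomial.eval x) (bernsteinPolynomial.sum_mul_smul ℝ n)
  simp only [nsmul_eq_mul, Polynomial.eval_finset_sum, Polynomial.eval_mul,
    Polynomial.eval_natCast, Polynomial.eval_pow, Polynomial.eval_X, bp_eval] at h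
  have key : ∑ k ∈ Finset.range (n+1), (k:ℝ)^2 * bp n k x
      = ∑ k ∈ Finset.range (n+1), ((k*(k-1) : ℕ) : ℝ) * bp n k x
        + ∑ k ∈ Finset.range (n+1), (k:ℝ) * bp n k x := by
    rw [← Finset.sum_add_distrib]
    refine Finset.sum_congr rfl fun k _ => ?_
    cases k with
    | zero => simp
    | succ j => push_cast [Nat.succ_sub_one]; ring
  rw [key, h, B1]
  rcases n with _ | p
  · simp
  · push_cast [Nat.succ_sub_one]; ring

lemma alpha_sum (N : ℕ) (α x : ℝ) (w : ℕ → ℝ) :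
    ∑ k ∈ Finset.range (N+3), alphaBernstein (N+2) k α x * w k
      = (1-α) * ((1-x) * ∑ k ∈ Finset.range (N+1), bp N k x * w k
          + x * ∑ j ∈ Finset.range (N+1), bp N j x * w (j+2))
        + α * ∑ k ∈ Finset.range (N+3), bp (N+2) k x * w k := by
  have hN2 : N + 2 - 2 = N := by omega
  simp only [alphaBernstein, hN2, add_mul]
  rw [Finset.sum_add_distrib, Finset.sum_add_distrib]
  have h1 : ∑ k ∈ Finset.range (N+3),
      (1-α) * ((N.choose k : ℝ)) * x ^ k * (1-x) ^ (N+2-k-1) * w k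
      = (1-α) * ((1-x) * ∑ k ∈ Finset.range (N+1), bp N k x * w k) := by
    rw [← Finset.sum_subset (Finset.range_subset_range.2 (by omega) :
        Finset.range (N+1) ⊆ Finset.range (N+3))]
    · rw [Finset.mul_sum, Finset.mul_sum]
      refine Finset.sum_congr rfl fun k hk => ?_
      have hk' : k ≤ N := by simpa [Nat.lt_succ_iff] using hk
      have : N + 2 - k - 1 = (N - k) + 1 := by omega
      rw [this, pow_succ, bp]; ring
    · intro k hk hk'
      have : N < k := by simp only [Finset.mem_range] at hk hk'; omega
      simp [Nat.choose_eq_zero_of_lt this]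
  have h2 : ∑ k ∈ Finset.range (N+3),
      (if 2 ≤ k then (1-α) * ((N.choose (k-2) : ℝ)) * x ^ (k-1) * (1-x) ^ (N+2-k) else 0) * w k
      = (1-α) * (x * ∑ j ∈ Finset.range (N+1), bp N j x * w (j+2)) := by
    rw [Finset.sum_range_succ' _ (N+2), Finset.sum_range_succ' _ (N+1)]
    simp only [show ¬ (2 ≤ 0) by omega, show ¬ (2 ≤ 0+1) by omega, if_neg, if_pos,
      not_false_iff, zero_mul, add_zero]
    rw [Finset.mul_sum, Finset.mul_sum]
    refine Finset.sum_congr rfl fun j hj => ?_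
    have h2j : 2 ≤ j + 1 + 1 := by omega
    rw [if_pos h2j]
    have e1 : j + 1 + 1 - 2 = j := by omega
    have e2 : j + 1 + 1 - 1 = j + 1 := by omega
    have e3 : N + 2 - (j + 1 + 1) = N - j := by omega
    rw [e1, e2, e3, pow_succ, bp]; ring
  have h3 : ∑ k ∈ Finset.range (N+3),
      α * (((N+2).choose k : ℝ)) * x ^ k * (1-x) ^ (N+2-k) * w k
      = α * ∑ k ∈ Finset.range (N+3), bp (N+2) k x * w k := by
    rw [Finset.mul_sum]
    refine Finset.sum_congr rfl fun k _ => ?_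
    rw [bp]; ring
  rw [h1, h2, h3]; ring

lemma alphaS0 (n : ℕ) (hn : 2 ≤ n) (α x : ℝ) :
    ∑ k ∈ Finset.range (n+1), alphaBernstein n k α x = 1 := by
  obtain ⟨N, rfl⟩ : ∃ N, n = N + 2 := ⟨n - 2, by omega⟩
  have h := alpha_sum N α x (fun _ => 1)
  simp only [mul_one] at h
  rw [show N + 2 + 1 = N + 3 by omega, h, B0, B0]
  ring

lemma alphaS1 (n : ℕ) (hn : 2 ≤ n) (α x : ℝ) :
    ∑ k ∈ Finset.range (n+1), alphaBernstein n k α x * (k:ℝ) = n * x := by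
  obtain ⟨N, rfl⟩ : ∃ N, n = N + 2 := ⟨n - 2, by omega⟩
  have h := alpha_sum N α x (fun k => (k:ℝ))
  have e1 : ∑ k ∈ Finset.range (N+1), bp N k x * (k:ℝ) = N * x := by
    rw [← B1]; exact Finset.sum_congr rfl fun k _ => by ring
  have e2 : ∑ j ∈ Finset.range (N+1), bp N j x * ((j+2 : ℕ):ℝ) = N * x + 2 := by
    have : ∀ j : ℕ, bp N j x * ((j+2 : ℕ):ℝ) = (j:ℝ) * bp N j x + 2 * bp N j x := by
      intro j; push_cast; ring
    simp only [this, Finset.sum_add_distrib, ← Finset.mul_sum, B0, B1]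
    ring
  have e3 : ∑ k ∈ Finset.range (N+3), bp (N+2) k x * (k:ℝ) = ((N:ℝ)+2) * x := by
    have h' := B1 (N+2) x
    rw [show N + 2 + 1 = N + 3 by omega] at h'
    push_cast at h'
    rw [show (∑ k ∈ Finset.range (N+3), bp (N+2) k x * (k:ℝ))
      = ∑ k ∈ Finset.range (N+3), (k:ℝ) * bp (N+2) k x from
      Finset.sum_congr rfl fun k _ => by ring, h']
  rw [show N + 2 + 1 = N + 3 by omega, h, e1, e2, e3]
  push_cast; ring

lemma alphaS2 (n : ℕ) (hn : 2 ≤ n) (α x : ℝ) :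
    ∑ k ∈ Finset.range (n+1), alphaBernstein n k α x * (k:ℝ)^2
      = ((n:ℝ)*(n:ℝ) - n - 2 + 2*α) * x^2 + ((n:ℝ) + 2 - 2*α) * x := by
  obtain ⟨N, rfl⟩ : ∃ N, n = N + 2 := ⟨n - 2, by omega⟩
  have h := alpha_sum N α x (fun k => (k:ℝ)^2)
  have e1 : ∑ k ∈ Finset.range (N+1), bp N k x * (k:ℝ)^2
      = (N:ℝ)*((N:ℝ)-1)*x^2 + N * x := by
    rw [← B2]; exact Finset.sum_congr rfl fun k _ => by ring
  have e2 : ∑ j ∈ Finset.range (N+1), bp N j x * ((j+2 : ℕ):ℝ)^2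
      = (N:ℝ)*((N:ℝ)-1)*x^2 + N * x + 4 * (N * x) + 4 := by
    have : ∀ j : ℕ, bp N j x * ((j+2 : ℕ):ℝ)^2
        = (j:ℝ)^2 * bp N j x + 4 * ((j:ℝ) * bp N j x) + 4 * bp N j x := by
      intro j; push_cast; ring
    simp only [this, Finset.sum_add_distrib, ← Finset.mul_sum, B0, B1, B2]
    ring
  have e3 : ∑ k ∈ Finset.range (N+3), bp (N+2) k x * (k:ℝ)^2
      = ((N:ℝ)+2)*((N:ℝ)+1)*x^2 + ((N:ℝ)+2) * x := by
    have h' := B2 (N+2) x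
    rw [show N + 2 + 1 = N + 3 by omega] at h'
    push_cast at h'
    rw [show (∑ k ∈ Finset.range (N+3), bp (N+2) k x * (k:ℝ)^2)
      = ∑ k ∈ Finset.range (N+3), (k:ℝ)^2 * bp (N+2) k x from
      Finset.sum_congr rfl fun k _ => by ring, h']
    ring
  rw [show N + 2 + 1 = N + 3 by omega, h, e1, e2, e3]
  push_cast; ring

open intervalIntegral in
lemma Irpow (r : ℝ) (hr : -1 < r) : ∫ u in (0:ℝ)..1, u ^ r = 1 / (r + 1) := by
  rw [integral_rpow (Or.inl hr), Real.one_rpow, Real.zero_rpow (by linarith)]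
  norm_num

lemma I0 (β : ℝ) (hβ : 0 < β) : ∫ t in (0:ℝ)..1, (1 - t) ^ (β - 1) = 1 / β := by
  have h := intervalIntegral.integral_comp_sub_left (a := (0:ℝ)) (b := 1)
    (fun u : ℝ => u ^ (β - 1)) 1
  norm_num at h
  rw [h, Irpow _ (by linarith)]
  norm_num

lemma Ik (β c : ℝ) (hβ : 0 < β) :
    ∫ t in (0:ℝ)..1, (1 - t) ^ (β - 1) * (c + t) ^ 2
      = (c+1)^2 / β - 2*(c+1) / (β+1) + 1 / (β+2) := by
  have h := intervalIntegral.integral_comp_sub_left (a := (0:ℝ)) (b := 1)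
    (fun u : ℝ => u ^ (β - 1) * (c + 1 - u) ^ 2) 1
  norm_num at h
  have e0 : ∫ t in (0:ℝ)..1, (1 - t) ^ (β - 1) * (c + t) ^ 2
      = ∫ t in (0:ℝ)..1, (1 - t) ^ (β - 1) * (c + 1 - (1 - t)) ^ 2 := by
    refine intervalIntegral.integral_congr fun t _ => ?_
    rw [show c + 1 - (1 - t) = c + t by ring]
  rw [e0, h]
  have e1 : ∫ u in (0:ℝ)..1, u ^ (β - 1) * (c + 1 - u) ^ 2
      = ∫ u in (0:ℝ)..1, ((c+1)^2 * u ^ (β-1) - 2*(c+1) * u ^ β) + u ^ (β+1) := by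
    refine intervalIntegral.integral_congr fun u hu => ?_
    rw [Set.uIcc_of_le (by norm_num : (0:ℝ) ≤ 1)] at hu
    rcases eq_or_lt_of_le hu.1 with h0 | h0
    · rw [← h0, Real.zero_rpow (by linarith : β ≠ 0),
        Real.zero_rpow (by linarith : β + 1 ≠ 0)]
      ring
    · have hb : u ^ β = u ^ (β-1) * u := by
        rw [← Real.rpow_add_one h0.ne' (β-1)]; norm_num
      have hb1 : u ^ (β+1) = u ^ β * u := Real.rpow_add_one h0.ne' β
      rw [hb1, hb]; ring
  have i1 : IntervalIntegrable (fun u : ℝ => u ^ (β-1)) MeasureTheory.volume 0 1 :=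
    intervalIntegral.intervalIntegrable_rpow' (by linarith)
  have i2 : IntervalIntegrable (fun u : ℝ => u ^ β) MeasureTheory.volume 0 1 :=
    intervalIntegral.intervalIntegrable_rpow' (by linarith)
  have i3 : IntervalIntegrable (fun u : ℝ => u ^ (β+1)) MeasureTheory.volume 0 1 :=
    intervalIntegral.intervalIntegrable_rpow' (by linarith)
  rw [e1, intervalIntegral.integral_add (((i1.const_mul _).sub (i2.const_mul _))) i3,
    intervalIntegral.integral_sub (i1.const_mul _) (i2.const_mul _),
    intervalIntegral.integral_const_mul, intervalIntegral.integral_const_mul,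
    Irpow _ (by linarith), Irpow _ (by linarith), Irpow _ (by linarith)]
  have : β - 1 + 1 = β := by ring
  rw [this]
  ring

lemma hD (n : ℕ) (β₁ β₂ : ℝ) (h1 : 0 < β₁) (h2 : 0 < β₂) (k : ℕ) :
    Real.Gamma (β₁ + 1) * Real.Gamma (β₂ + 1) *
      ∫ t in (0:ℝ)..1, ∫ s in (0:ℝ)..1,
        (1 - t) ^ (β₁ - 1) * (1 - s) ^ (β₂ - 1) / (Real.Gamma β₁ * Real.Gamma β₂) *
          (((k:ℝ) + t) / ((n:ℝ) + 1)) ^ 2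
    = ((k:ℝ)^2 + 2*(k:ℝ)/(β₁+1) + 2/((β₁+1)*(β₁+2))) / ((n:ℝ)+1)^2 := by
  have hg1 : 0 < Real.Gamma β₁ := Real.Gamma_pos_of_pos h1
  have hg2 : 0 < Real.Gamma β₂ := Real.Gamma_pos_of_pos h2
  set Γ₁ := Real.Gamma β₁
  set Γ₂ := Real.Gamma β₂
  have hn1 : ((n:ℝ)+1) ≠ 0 := by positivity
  have inner : ∀ t : ℝ, (∫ s in (0:ℝ)..1,
        (1-t)^(β₁-1)*(1-s)^(β₂-1)/(Γ₁*Γ₂)*(((k:ℝ)+t)/((n:ℝ)+1))^2)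
      = ((1-t)^(β₁-1)*(((k:ℝ)+t))^2) * (1/(Γ₁*Γ₂*β₂*((n:ℝ)+1)^2)) := by
    intro t
    have hpt : ∀ s : ℝ, (1-t)^(β₁-1)*(1-s)^(β₂-1)/(Γ₁*Γ₂)*(((k:ℝ)+t)/((n:ℝ)+1))^2
        = ((1-t)^(β₁-1)*((k:ℝ)+t)^2/(Γ₁*Γ₂*((n:ℝ)+1)^2)) * (1-s)^(β₂-1) := by
      intro s; rw [div_pow]; field_simp
    rw [intervalIntegral.integral_congr (fun s _ => hpt s),
      intervalIntegral.integral_const_mul, I0 β₂ h2]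
    rw [mul_one_div, mul_one_div, div_div]
    congr 1
    ring
  rw [intervalIntegral.integral_congr (fun t _ => inner t),
    intervalIntegral.integral_mul_const, Ik β₁ (k:ℝ) h1,
    Real.Gamma_add_one h1.ne', Real.Gamma_add_one h2.ne']
  field_simp
  ring

theorem bivFracKantorovich_second_moment (n m : ℕ) (hn : 2 ≤ n) (hm : 2 ≤ m)
    (α₁ α₂ β₁ β₂ x y : ℝ)
    (hα₁ : α₁ ∈ Set.Icc (0:ℝ) 1) (hα₂ : α₂ ∈ Set.Icc (0:ℝ) 1)
    (hβ₁ : β₁ ∈ Set.Ioc (0:ℝ) 1) (hβ₂ : β₂ ∈ Set.Ioc (0:ℝ) 1)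
    (hx : x ∈ Set.Icc (0:ℝ) 1) (hy : y ∈ Set.Icc (0:ℝ) 1) :
    bivFracKantorovich n m α₁ α₂ β₁ β₂ (fun t _ => t ^ 2) x y
      = ((n : ℝ) ^ 2 / (n + 1) ^ 2) *
          (x ^ 2 + ((n + 2 * (1 - α₁)) / (n : ℝ) ^ 2) * x * (1 - x))
        + 2 * n * x / ((β₁ + 1) * (n + 1) ^ 2)
        + 2 / ((n + 1) ^ 2 * (2 + β₁) * (1 + β₁)) := by
  have hb1 : 0 < β₁ := hβ₁.1
  have hb2 : 0 < β₂ := hβ₂.1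
  have hn1 : ((n:ℝ)+1) ≠ 0 := by positivity
  have hnn : (n:ℝ) ≠ 0 := by positivity
  have hbb1 : β₁ + 1 ≠ 0 := by linarith
  have hbb2 : β₁ + 2 ≠ 0 := by linarith
  set V : ℕ → ℝ := fun k => ((k:ℝ)^2 + 2*(k:ℝ)/(β₁+1) + 2/((β₁+1)*(β₁+2)))/((n:ℝ)+1)^2
    with hV
  have step1 : bivFracKantorovich n m α₁ α₂ β₁ β₂ (fun t _ => t ^ 2) x y
      = ∑ k ∈ Finset.range (n+1), alphaBernstein n k α₁ x * V k := by
    rw [bivFracKantorovich]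
    refine Finset.sum_congr rfl fun k _ => ?_
    have hrow : ∀ j ∈ Finset.range (m+1),
        alphaBernstein n k α₁ x * alphaBernstein m j α₂ y *
          (Real.Gamma (β₁ + 1) * Real.Gamma (β₂ + 1) *
            ∫ t in (0:ℝ)..1, ∫ s in (0:ℝ)..1,
              (1 - t) ^ (β₁ - 1) * (1 - s) ^ (β₂ - 1) / (Real.Gamma β₁ * Real.Gamma β₂) *
                (fun t _ => t ^ 2) ((k + t) / (n + 1)) ((j + s) / (m + 1)))
        = (alphaBernstein n k α₁ x * V k) * alphaBernstein m j α₂ y := by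
      intro j _
      have := hD n β₁ β₂ hb1 hb2 k
      simp only []
      rw [this, hV]
      ring
    rw [Finset.sum_congr rfl hrow, ← Finset.mul_sum, alphaS0 m hm, mul_one]
  rw [step1]
  have expand : ∀ k : ℕ, alphaBernstein n k α₁ x * V k
      = (alphaBernstein n k α₁ x * (k:ℝ)^2) * (1/((n:ℝ)+1)^2)
        + (alphaBernstein n k α₁ x * (k:ℝ)) * (2/((β₁+1)*((n:ℝ)+1)^2))
        + alphaBernstein n k α₁ x * (2/((β₁+1)*(β₁+2)*((n:ℝ)+1)^2)) := by
    intro k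
    rw [hV]
    field_simp
  rw [Finset.sum_congr rfl (fun k _ => expand k), Finset.sum_add_distrib,
    Finset.sum_add_distrib, ← Finset.sum_mul, ← Finset.sum_mul, ← Finset.sum_mul,
    alphaS2 n hn, alphaS1 n hn, alphaS0 n hn]
  field_simp
  ring
end
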